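/- arXiv:2512.19319 — 7 statements merged into one kernel-verified Lean document; each statement's English description precedes it below -/
import Mathlib

section
/- Let g be a (right) Leibniz algebra and B a Zinbiel algebra over a field k. Then g ⊗ B with the bracket (a₁⊗b₁) * (a₂⊗b₂) := [a₁,a₂]⊗(b₁·b₂) − [a₂,a₁]⊗(b₂·b₁) satisfies the Jacobi identity, and hence is a Lie algebra. -/
open TensorProduct

/-- The bracket (a₁⊗b₁)*(a₂⊗b₂) = [a₁,a₂]⊗(b₁·b₂) − [a₂,a₁]⊗(b₂·b₁) on
g ⊗ B (g Leibniz, B Zinbiel) satisfies the Jacobi identity. -/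
theorem tensor_leibniz_zinbiel_jacobi {k : Type*} [Field k]
    {g B : Type*} [AddCommGroup g] [Module k g] [AddCommGroup B] [Module k B]
    (br : g →ₗ[k] g →ₗ[k] g)
    (hleib : ∀ x y z : g, br x (br y z) = br (br x y) z - br (br x z) y)
    (mul : B →ₗ[k] B →ₗ[k] B)
    (hz : ∀ x y z : B, mul (mul x y) z = mul x (mul y z + mul z y))
    (star : (g ⊗[k] B) →ₗ[k] (g ⊗[k] B) →ₗ[k] (g ⊗[k] B))
    (hstar : ∀ (a₁ a₂ : g) (b₁ b₂ : B),
      star (a₁ ⊗ₜ[k] b₁) (a₂ ⊗ₜ[k] b₂) =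
        br a₁ a₂ ⊗ₜ[k] mul b₁ b₂ - br a₂ a₁ ⊗ₜ[k] mul b₂ b₁) :
    ∀ u v w : g ⊗[k] B,
      star (star u v) w + star (star v w) u + star (star w u) v = 0 := by
  have key : ∀ (a b c : g) (x y z : B),
      star (star (a ⊗ₜ[k] x) (b ⊗ₜ[k] y)) (c ⊗ₜ[k] z)
        + star (star (b ⊗ₜ[k] y) (c ⊗ₜ[k] z)) (a ⊗ₜ[k] x)
        + star (star (c ⊗ₜ[k] z) (a ⊗ₜ[k] x)) (b ⊗ₜ[k] y) = 0 := by
    intro a b c x y z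
    simp only [hstar, map_sub, LinearMap.sub_apply, hz, hleib,
      sub_tmul, tmul_add, tmul_sub, map_add, LinearMap.add_apply]
    abel
  intro u v w
  induction u using TensorProduct.induction_on with
  | zero => simp
  | add u₁ u₂ h₁ h₂ =>
    have : star (star (u₁ + u₂) v) w + star (star v w) (u₁ + u₂)
        + star (star w (u₁ + u₂)) v
        = (star (star u₁ v) w + star (star v w) u₁ + star (star w u₁) v)
          + (star (star u₂ v) w + star (star v w) u₂ + star (star w u₂) v) := by
      simp only [map_add, LinearMap.add_apply]; abel
    rw [this, h₁, h₂, add_zero]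
  | tmul a x =>
    induction v using TensorProduct.induction_on with
    | zero => simp
    | add v₁ v₂ h₁ h₂ =>
      have : star (star (a ⊗ₜ[k] x) (v₁ + v₂)) w + star (star (v₁ + v₂) w) (a ⊗ₜ[k] x)
          + star (star w (a ⊗ₜ[k] x)) (v₁ + v₂)
          = (star (star (a ⊗ₜ[k] x) v₁) w + star (star v₁ w) (a ⊗ₜ[k] x)
              + star (star w (a ⊗ₜ[k] x)) v₁)
            + (star (star (a ⊗ₜ[k] x) v₂) w + star (star v₂ w) (a ⊗ₜ[k] x)
              + star (star w (a ⊗ₜ[k] x)) v₂) := by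
        simp only [map_add, LinearMap.add_apply]; abel
      rw [this, h₁, h₂, add_zero]
    | tmul b y =>
      induction w using TensorProduct.induction_on with
      | zero => simp
      | add w₁ w₂ h₁ h₂ =>
        have : star (star (a ⊗ₜ[k] x) (b ⊗ₜ[k] y)) (w₁ + w₂)
            + star (star (b ⊗ₜ[k] y) (w₁ + w₂)) (a ⊗ₜ[k] x)
            + star (star (w₁ + w₂) (a ⊗ₜ[k] x)) (b ⊗ₜ[k] y)
            = (star (star (a ⊗ₜ[k] x) (b ⊗ₜ[k] y)) w₁
                + star (star (b ⊗ₜ[k] y) w₁) (a ⊗ₜ[k] x)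
                + star (star w₁ (a ⊗ₜ[k] x)) (b ⊗ₜ[k] y))
              + (star (star (a ⊗ₜ[k] x) (b ⊗ₜ[k] y)) w₂
                + star (star (b ⊗ₜ[k] y) w₂) (a ⊗ₜ[k] x)
                + star (star w₂ (a ⊗ₜ[k] x)) (b ⊗ₜ[k] y)) := by
          simp only [map_add, LinearMap.add_apply]; abel
        rw [this, h₁, h₂, add_zero]
      | tmul c z => exact key a b c x y z
end

section
/- Let B be a Zinbiel algebra and M a B-bimodule. The degree-1 Zinbiel coboundary δ₁ defined by (δ₁ f)(x,y) = x·f(y) − f(x·y) + f(x)·y, and the degree-2 coboundary δ₂ defined by (δ₂ f)(x,y,z) = x·f(y,z) + x·f(z,y) − f(x·y, z) + f(x, y·z) + f(x, z·y) − f(x,y)·z, satisfy δ₂ ∘ δ₁ = 0. -/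
/-- δ₂ ∘ δ₁ = 0 for Zinbiel cohomology. -/
theorem zinbiel_d2_comp_d1 {k : Type*} [Field k]
    {B M : Type*} [AddCommGroup B] [Module k B] [AddCommGroup M] [Module k M]
    (mul : B →ₗ[k] B →ₗ[k] B)
    (hz : ∀ x y z : B, mul (mul x y) z = mul x (mul y z + mul z y))
    (l : B →ₗ[k] M →ₗ[k] M) (r : M →ₗ[k] B →ₗ[k] M)
    (hlm : ∀ (x : B) (m : M) (z : B), r (l x m) z = l x (r m z + l z m))
    (hmr : ∀ (m : M) (y z : B), r (r m y) z = r m (mul y z + mul z y))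
    (hll : ∀ (x y : B) (m : M), l (mul x y) m = l x (l y m + r m y)) :
    ∀ (f : B →ₗ[k] M) (x y z : B),
      (let d1 : B → B → M := fun a b => l a (f b) - f (mul a b) + r (f a) b
       l x (d1 y z) + l x (d1 z y) - d1 (mul x y) z
         + d1 x (mul y z) + d1 x (mul z y) - r (d1 x y) z) = 0 := by
  intro f x y z
  simp only [map_add, map_sub, map_neg, LinearMap.add_apply, LinearMap.sub_apply, LinearMap.neg_apply, LinearMap.smul_apply, hz, hlm, hmr, hll, smul_add, neg_smul, one_smul, neg_add_rev]
  abel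
end

section
/- Let B be a Zinbiel algebra and M a B-bimodule. The degree-2 coboundary δ₂ and degree-3 coboundary δ₃, given by (δ₂ f)(x,y,z) = x·f(y,z) + x·f(z,y) − f(x·y,z) + f(x,y·z) + f(x,z·y) − f(x,y)·z and (δ₃ f)(w,x,y,z) = w·f(x,y,z) − w·f(y,z,x) + w·f(y,x,z) − w·f(z,y,x) − f(w·x,y,z) + f(w,x·y,z) + f(w,y·x,z) − f(w,x,y·z) − f(w,x,z·y) + f(w,x,y)·z, satisfy δ₃ ∘ δ₂ = 0. -/
/-- δ₃ ∘ δ₂ = 0 for Zinbiel cohomology. -/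
theorem zinbiel_d3_comp_d2 {k : Type*} [Field k]
    {B M : Type*} [AddCommGroup B] [Module k B] [AddCommGroup M] [Module k M]
    (mul : B →ₗ[k] B →ₗ[k] B)
    (hz : ∀ x y z : B, mul (mul x y) z = mul x (mul y z + mul z y))
    (l : B →ₗ[k] M →ₗ[k] M) (r : M →ₗ[k] B →ₗ[k] M)
    (hlm : ∀ (x : B) (m : M) (z : B), r (l x m) z = l x (r m z + l z m))
    (hmr : ∀ (m : M) (y z : B), r (r m y) z = r m (mul y z + mul z y))
    (hll : ∀ (x y : B) (m : M), l (mul x y) m = l x (l y m + r m y)) :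
    ∀ (f : B →ₗ[k] B →ₗ[k] M) (w x y z : B),
      (let d2 : B → B → B → M := fun a b c =>
        l a (f b c) + l a (f c b) - f (mul a b) c
          + f a (mul b c) + f a (mul c b) - r (f a b) c
       l w (d2 x y z) - l w (d2 y z x) + l w (d2 y x z) - l w (d2 z y x)
         - d2 (mul w x) y z + d2 w (mul x y) z + d2 w (mul y x) z
         - d2 w x (mul y z) - d2 w x (mul z y) + r (d2 w x y) z) = 0 := by
  intro f w x y z
  simp only [map_add, map_sub, LinearMap.add_apply, LinearMap.sub_apply, hz, hll, hlm, hmr]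
  abel
end

section
/- Let g be a Leibniz algebra, B a Zinbiel algebra, and M a B-bimodule. Then g ⊗ M with the action (a₁⊗m) * (a₂⊗b₂) := [a₁,a₂]⊗(m·b₂) − [a₂,a₁]⊗(b₂·m) is a module over the Lie algebra g ⊗ B (with bracket (a₁⊗b₁)*(a₂⊗b₂) = [a₁,a₂]⊗(b₁·b₂) − [a₂,a₁]⊗(b₂·b₁)). -/
open TensorProduct

/-- g ⊗ M with the action (a₁⊗m)*(a₂⊗b₂) = [a₁,a₂]⊗(m·b₂) − [a₂,a₁]⊗(b₂·m)
is a module over the Lie algebra g ⊗ B. -/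
theorem tensor_module_over_tensor_lie {k : Type*} [Field k]
    {g B M : Type*} [AddCommGroup g] [Module k g] [AddCommGroup B] [Module k B]
    [AddCommGroup M] [Module k M]
    (br : g →ₗ[k] g →ₗ[k] g)
    (hleib : ∀ x y z : g, br x (br y z) = br (br x y) z - br (br x z) y)
    (mul : B →ₗ[k] B →ₗ[k] B)
    (hz : ∀ x y z : B, mul (mul x y) z = mul x (mul y z + mul z y))
    (l : B →ₗ[k] M →ₗ[k] M) (r : M →ₗ[k] B →ₗ[k] M)
    (hlm : ∀ (x : B) (m : M) (z : B), r (l x m) z = l x (r m z + l z m))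
    (hmr : ∀ (m : M) (y z : B), r (r m y) z = r m (mul y z + mul z y))
    (hll : ∀ (x y : B) (m : M), l (mul x y) m = l x (l y m + r m y))
    -- the Lie bracket on g ⊗ B:
    (star : (g ⊗[k] B) →ₗ[k] (g ⊗[k] B) →ₗ[k] (g ⊗[k] B))
    (hstar : ∀ (a₁ a₂ : g) (b₁ b₂ : B),
      star (a₁ ⊗ₜ[k] b₁) (a₂ ⊗ₜ[k] b₂) =
        br a₁ a₂ ⊗ₜ[k] mul b₁ b₂ - br a₂ a₁ ⊗ₜ[k] mul b₂ b₁)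
    -- the action of g ⊗ B on g ⊗ M:
    (act : (g ⊗[k] M) →ₗ[k] (g ⊗[k] B) →ₗ[k] (g ⊗[k] M))
    (hact : ∀ (a₁ a₂ : g) (m : M) (b₂ : B),
      act (a₁ ⊗ₜ[k] m) (a₂ ⊗ₜ[k] b₂) =
        br a₁ a₂ ⊗ₜ[k] r m b₂ - br a₂ a₁ ⊗ₜ[k] l b₂ m) :
    ∀ (v : g ⊗[k] M) (u w : g ⊗[k] B),
      act v (star u w) = act (act v u) w - act (act v w) u := by
  intro v u w
  induction u using TensorProduct.induction_on with
  | zero => simp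
  | add u1 u2 h1 h2 =>
      simp only [map_add, LinearMap.add_apply] at h1 h2 ⊢
      rw [h1, h2]; abel
  | tmul x b =>
    induction w using TensorProduct.induction_on with
    | zero => simp
    | add w1 w2 h1 h2 =>
        simp only [map_add, LinearMap.add_apply] at h1 h2 ⊢
        rw [h1, h2]; abel
    | tmul y c =>
      induction v using TensorProduct.induction_on with
      | zero => simp
      | add v1 v2 h1 h2 =>
          simp only [map_add, LinearMap.add_apply] at h1 h2 ⊢
          rw [h1, h2]; abel
      | tmul a m =>
        simp only [hstar, map_sub, LinearMap.sub_apply, hact, map_add,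
          LinearMap.add_apply, hleib, hlm, hmr, hll, sub_tmul, tmul_sub,
          add_tmul, tmul_add]
        abel
end

section
/- Let g be a Leibniz algebra, B a Zinbiel algebra, M a B-bimodule, and consider the Lie algebra g⊗B acting on g⊗M. For a linear map f : B → M, define Ψf : g⊗B → g⊗M by Ψf(x⊗b) = x⊗f(b). Then δ_Lie(Ψf)(x₁⊗b₁, x₂⊗b₂) = [x₁,x₂]⊗(δ_DL f)(b₁,b₂) − [x₂,x₁]⊗(δ_DL f)(b₂,b₁), where (δ_DL f)(b₁,b₂) = b₁·f(b₂) − f(b₁·b₂) + f(b₁)·b₂ and δ_Lie is the Chevalley–Eilenberg differential. -/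
open TensorProduct

/-- For a linear map f : B → M, with Ψf(x⊗b) = x⊗f(b), the Chevalley–Eilenberg
differential of Ψf on g⊗B is Ψ of the Zinbiel differential of f. -/
theorem psi_commutes_with_d1 {k : Type*} [Field k]
    {g B M : Type*} [AddCommGroup g] [Module k g] [AddCommGroup B] [Module k B]
    [AddCommGroup M] [Module k M]
    (br : g →ₗ[k] g →ₗ[k] g)
    (hleib : ∀ x y z : g, br x (br y z) = br (br x y) z - br (br x z) y)
    (mul : B →ₗ[k] B →ₗ[k] B)
    (hz : ∀ x y z : B, mul (mul x y) z = mul x (mul y z + mul z y))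
    (l : B →ₗ[k] M →ₗ[k] M) (r : M →ₗ[k] B →ₗ[k] M)
    (hlm : ∀ (x : B) (m : M) (z : B), r (l x m) z = l x (r m z + l z m))
    (hmr : ∀ (m : M) (y z : B), r (r m y) z = r m (mul y z + mul z y))
    (hll : ∀ (x y : B) (m : M), l (mul x y) m = l x (l y m + r m y))
    -- the Lie bracket on g ⊗ B:
    (star : (g ⊗[k] B) →ₗ[k] (g ⊗[k] B) →ₗ[k] (g ⊗[k] B))
    (hstar : ∀ (a₁ a₂ : g) (b₁ b₂ : B),
      star (a₁ ⊗ₜ[k] b₁) (a₂ ⊗ₜ[k] b₂) =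
        br a₁ a₂ ⊗ₜ[k] mul b₁ b₂ - br a₂ a₁ ⊗ₜ[k] mul b₂ b₁)
    -- the action of g ⊗ B on g ⊗ M:
    (ρ : (g ⊗[k] B) →ₗ[k] (g ⊗[k] M) →ₗ[k] (g ⊗[k] M))
    (hρ : ∀ (a a' : g) (b : B) (m : M),
      ρ (a ⊗ₜ[k] b) (a' ⊗ₜ[k] m) =
        br a a' ⊗ₜ[k] l b m - br a' a ⊗ₜ[k] r m b)
    (f : B →ₗ[k] M) :
    ∀ (x₁ x₂ : g) (b₁ b₂ : B),
      (let Ψf : (g ⊗[k] B) →ₗ[k] (g ⊗[k] M) :=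
        TensorProduct.map (LinearMap.id) f
       ρ (x₁ ⊗ₜ[k] b₁) (Ψf (x₂ ⊗ₜ[k] b₂)) - ρ (x₂ ⊗ₜ[k] b₂) (Ψf (x₁ ⊗ₜ[k] b₁))
         - Ψf (star (x₁ ⊗ₜ[k] b₁) (x₂ ⊗ₜ[k] b₂))) =
      br x₁ x₂ ⊗ₜ[k] (l b₁ (f b₂) - f (mul b₁ b₂) + r (f b₁) b₂)
        - br x₂ x₁ ⊗ₜ[k] (l b₂ (f b₁) - f (mul b₂ b₁) + r (f b₂) b₁) := by
  intro x₁ x₂ b₁ b₂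
  simp only [TensorProduct.map_tmul, LinearMap.id_coe, id_eq, hρ, hstar, map_sub,
    TensorProduct.tmul_sub, TensorProduct.sub_tmul, TensorProduct.tmul_add]
  abel
end

section
/- Let g be a Leibniz algebra, B a Zinbiel algebra, M a B-bimodule. For a bilinear map f : B⊗B → M define Ψf(x₁⊗b₁, x₂⊗b₂) = [x₁,x₂]⊗f(b₁,b₂) − [x₂,x₁]⊗f(b₂,b₁). Then the Chevalley–Eilenberg differential satisfies δ_Lie(Ψf)(y₁,y₂,y₃) = Σ_{σ∈S₃} sgn(σ) [[x_{σ(1)},x_{σ(2)}],x_{σ(3)}] ⊗ (δ_DL f)(b_{σ(1)},b_{σ(2)},b_{σ(3)}) where yᵢ = xᵢ⊗bᵢ and (δ_DL f)(b₁,b₂,b₃) = b₁·f(b₂,b₃) + b₁·f(b₃,b₂) − f(b₁·b₂,b₃) + f(b₁,b₂·b₃) + f(b₁,b₃·b₂) − f(b₁,b₂)·b₃. -/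
open TensorProduct

/-- The Chevalley–Eilenberg differential of Ψf equals the signed sum over S₃ of
left-normed brackets tensored with the Zinbiel differential of f. -/
theorem psi_commutes_with_d2 {k : Type*} [Field k]
    {g B M : Type*} [AddCommGroup g] [Module k g] [AddCommGroup B] [Module k B]
    [AddCommGroup M] [Module k M]
    (br : g →ₗ[k] g →ₗ[k] g)
    (hleib : ∀ x y z : g, br x (br y z) = br (br x y) z - br (br x z) y)
    (mul : B →ₗ[k] B →ₗ[k] B)
    (hz : ∀ x y z : B, mul (mul x y) z = mul x (mul y z + mul z y))
    (l : B →ₗ[k] M →ₗ[k] M) (r : M →ₗ[k] B →ₗ[k] M)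
    (hlm : ∀ (x : B) (m : M) (z : B), r (l x m) z = l x (r m z + l z m))
    (hmr : ∀ (m : M) (y z : B), r (r m y) z = r m (mul y z + mul z y))
    (hll : ∀ (x y : B) (m : M), l (mul x y) m = l x (l y m + r m y))
    -- the Lie bracket on g ⊗ B:
    (star : (g ⊗[k] B) →ₗ[k] (g ⊗[k] B) →ₗ[k] (g ⊗[k] B))
    (hstar : ∀ (a₁ a₂ : g) (b₁ b₂ : B),
      star (a₁ ⊗ₜ[k] b₁) (a₂ ⊗ₜ[k] b₂) =
        br a₁ a₂ ⊗ₜ[k] mul b₁ b₂ - br a₂ a₁ ⊗ₜ[k] mul b₂ b₁)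
    -- the action of g ⊗ B on g ⊗ M:
    (ρ : (g ⊗[k] B) →ₗ[k] (g ⊗[k] M) →ₗ[k] (g ⊗[k] M))
    (hρ : ∀ (a a' : g) (b : B) (m : M),
      ρ (a ⊗ₜ[k] b) (a' ⊗ₜ[k] m) =
        br a a' ⊗ₜ[k] l b m - br a' a ⊗ₜ[k] r m b)
    (f : B →ₗ[k] B →ₗ[k] M)
    (F : (g ⊗[k] B) →ₗ[k] (g ⊗[k] B) →ₗ[k] (g ⊗[k] M))
    (hF : ∀ (x₁ x₂ : g) (b₁ b₂ : B),
      F (x₁ ⊗ₜ[k] b₁) (x₂ ⊗ₜ[k] b₂) =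
        br x₁ x₂ ⊗ₜ[k] f b₁ b₂ - br x₂ x₁ ⊗ₜ[k] f b₂ b₁) :
    ∀ (x : Fin 3 → g) (b : Fin 3 → B),
      (let y : Fin 3 → g ⊗[k] B := fun i => x i ⊗ₜ[k] b i
       ρ (y 0) (F (y 1) (y 2)) - ρ (y 1) (F (y 0) (y 2)) + ρ (y 2) (F (y 0) (y 1))
         - F (star (y 0) (y 1)) (y 2) + F (star (y 0) (y 2)) (y 1)
         - F (star (y 1) (y 2)) (y 0)) =
      ∑ σ : Equiv.Perm (Fin 3), ((Equiv.Perm.sign σ : ℤ) •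
        (br (br (x (σ 0)) (x (σ 1))) (x (σ 2)) ⊗ₜ[k]
          (l (b (σ 0)) (f (b (σ 1)) (b (σ 2))) + l (b (σ 0)) (f (b (σ 2)) (b (σ 1)))
            - f (mul (b (σ 0)) (b (σ 1))) (b (σ 2))
            + f (b (σ 0)) (mul (b (σ 1)) (b (σ 2)))
            + f (b (σ 0)) (mul (b (σ 2)) (b (σ 1)))
            - r (f (b (σ 0)) (b (σ 1))) (b (σ 2))))) := by
  intro x b
  dsimp only
  rw [show (Finset.univ : Finset (Equiv.Perm (Fin 3))) =
      {1, Equiv.swap 0 1, Equiv.swap 0 2, Equiv.swap 1 2,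
       (Equiv.swap 0 1 * Equiv.swap 1 2 : Equiv.Perm (Fin 3)),
       (Equiv.swap 0 2 * Equiv.swap 1 2 : Equiv.Perm (Fin 3))} from by decide]
  rw [Finset.sum_insert (by decide), Finset.sum_insert (by decide),
      Finset.sum_insert (by decide), Finset.sum_insert (by decide),
      Finset.sum_insert (by decide), Finset.sum_singleton]
  simp only [
    show ((Equiv.Perm.sign (1 : Equiv.Perm (Fin 3))) : ℤ) = 1 from by decide,
    show (1 : Equiv.Perm (Fin 3)) 0 = 0 from by decide,
    show (1 : Equiv.Perm (Fin 3)) 1 = 1 from by decide,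
    show (1 : Equiv.Perm (Fin 3)) 2 = 2 from by decide,
    show ((Equiv.Perm.sign (Equiv.swap 0 1 : Equiv.Perm (Fin 3))) : ℤ) = -1 from by decide,
    show (Equiv.swap 0 1 : Equiv.Perm (Fin 3)) 0 = 1 from by decide,
    show (Equiv.swap 0 1 : Equiv.Perm (Fin 3)) 1 = 0 from by decide,
    show (Equiv.swap 0 1 : Equiv.Perm (Fin 3)) 2 = 2 from by decide,
    show ((Equiv.Perm.sign (Equiv.swap 0 2 : Equiv.Perm (Fin 3))) : ℤ) = -1 from by decide,
    show (Equiv.swap 0 2 : Equiv.Perm (Fin 3)) 0 = 2 from by decide,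
    show (Equiv.swap 0 2 : Equiv.Perm (Fin 3)) 1 = 1 from by decide,
    show (Equiv.swap 0 2 : Equiv.Perm (Fin 3)) 2 = 0 from by decide,
    show ((Equiv.Perm.sign (Equiv.swap 1 2 : Equiv.Perm (Fin 3))) : ℤ) = -1 from by decide,
    show (Equiv.swap 1 2 : Equiv.Perm (Fin 3)) 0 = 0 from by decide,
    show (Equiv.swap 1 2 : Equiv.Perm (Fin 3)) 1 = 2 from by decide,
    show (Equiv.swap 1 2 : Equiv.Perm (Fin 3)) 2 = 1 from by decide,
    show ((Equiv.Perm.sign (Equiv.swap 0 1 * Equiv.swap 1 2 : Equiv.Perm (Fin 3))) : ℤ) = 1 from by decide,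
    show (Equiv.swap 0 1 * Equiv.swap 1 2 : Equiv.Perm (Fin 3)) 0 = 1 from by decide,
    show (Equiv.swap 0 1 * Equiv.swap 1 2 : Equiv.Perm (Fin 3)) 1 = 2 from by decide,
    show (Equiv.swap 0 1 * Equiv.swap 1 2 : Equiv.Perm (Fin 3)) 2 = 0 from by decide,
    show ((Equiv.Perm.sign (Equiv.swap 0 2 * Equiv.swap 1 2 : Equiv.Perm (Fin 3))) : ℤ) = 1 from by decide,
    show (Equiv.swap 0 2 * Equiv.swap 1 2 : Equiv.Perm (Fin 3)) 0 = 2 from by decide,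
    show (Equiv.swap 0 2 * Equiv.swap 1 2 : Equiv.Perm (Fin 3)) 1 = 0 from by decide,
    show (Equiv.swap 0 2 * Equiv.swap 1 2 : Equiv.Perm (Fin 3)) 2 = 1 from by decide]
  simp only [hF, hstar, hρ, map_sub, map_add, LinearMap.sub_apply, LinearMap.add_apply]
  simp only [hleib]
  simp only [TensorProduct.sub_tmul, TensorProduct.tmul_sub, TensorProduct.tmul_add,
    TensorProduct.add_tmul, one_smul, neg_smul, smul_sub, smul_add]
  abel
end

section
/- Let B be the 2-dimensional Zinbiel algebra over a field k of characteristic zero with basis e₁,e₂ and product e₁·e₁ = e₂, all other products of basis elements zero. Then the second Zinbiel cohomology H²_DL(B,B) with coefficients in the adjoint bimodule is 1-dimensional over k. -/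
/-- The product on k² with e₁·e₁ = e₂ and all other basis products zero. -/
noncomputable def zmul16 (k : Type*) [Field k] :
    (Fin 2 → k) →ₗ[k] (Fin 2 → k) →ₗ[k] (Fin 2 → k) :=
  (LinearMap.proj 0).smulRight
    ((LinearMap.proj 0).smulRight (Pi.single 1 1 : Fin 2 → k))

/-- The Zinbiel coboundary of a 1-cochain:
(δ₁ g)(x,y) = x·g(y) − g(x·y) + g(x)·y. -/
noncomputable def zd116 (k : Type*) [Field k]
    (g : (Fin 2 → k) →ₗ[k] (Fin 2 → k)) :
    (Fin 2 → k) →ₗ[k] (Fin 2 → k) →ₗ[k] (Fin 2 → k) :=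
  (zmul16 k).compl₂ g - (zmul16 k).compr₂ g + (zmul16 k).comp g

/-- The Zinbiel coboundary on 2-cochains, as a linear map into the space of
triple-indexed families:
(δ₂ f)(x,y,z) = x·f(y,z) + x·f(z,y) − f(x·y,z) + f(x,y·z) + f(x,z·y) − f(x,y)·z. -/
noncomputable def zd216 (k : Type*) [Field k] :
    ((Fin 2 → k) →ₗ[k] (Fin 2 → k) →ₗ[k] (Fin 2 → k)) →ₗ[k]
      ((Fin 2 → k) → (Fin 2 → k) → (Fin 2 → k) → (Fin 2 → k)) where
  toFun f := fun x y z =>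
    zmul16 k x (f y z) + zmul16 k x (f z y) - f (zmul16 k x y) z
      + f x (zmul16 k y z) + f x (zmul16 k z y) - zmul16 k (f x y) z
  map_add' f g := by
    funext x y z
    simp only [LinearMap.add_apply, map_add, Pi.add_apply]
    abel
  map_smul' c f := by
    funext x y z
    simp only [LinearMap.smul_apply, map_smul, Pi.smul_apply, RingHom.id_apply,
      smul_add, smul_sub]

lemma zmul16_apply (k : Type*) [Field k] (x y : Fin 2 → k) :
    zmul16 k x y = (x 0 * y 0) • (Pi.single 1 1 : Fin 2 → k) := by
  simp [zmul16, smul_smul]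

lemma zd116_apply (k : Type*) [Field k] (g : (Fin 2 → k) →ₗ[k] (Fin 2 → k))
    (x y : Fin 2 → k) :
    zd116 k g x y = zmul16 k x (g y) - g (zmul16 k x y) + zmul16 k (g x) y := rfl

lemma zd216_apply (k : Type*) [Field k]
    (f : (Fin 2 → k) →ₗ[k] (Fin 2 → k) →ₗ[k] (Fin 2 → k)) (x y z : Fin 2 → k) :
    zd216 k f x y z = zmul16 k x (f y z) + zmul16 k x (f z y) - f (zmul16 k x y) z
      + f x (zmul16 k y z) + f x (zmul16 k z y) - zmul16 k (f x y) z := rfl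

/-- The functional f ↦ (f e₁ e₂)₂ − (f e₂ e₁)₂. -/
noncomputable def zphi16 (k : Type*) [Field k] :
    ((Fin 2 → k) →ₗ[k] (Fin 2 → k) →ₗ[k] (Fin 2 → k)) →ₗ[k] k where
  toFun f := f (Pi.single 0 1) (Pi.single 1 1) 1 - f (Pi.single 1 1) (Pi.single 0 1) 1
  map_add' f g := by simp; ring
  map_smul' c f := by simp [mul_sub]

lemma pi_two_decomp (k : Type*) [Field k] (v : Fin 2 → k) :
    v = v 0 • (Pi.single 0 1 : Fin 2 → k) + v 1 • (Pi.single 1 1 : Fin 2 → k) := by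
  funext i
  fin_cases i <;> simp

set_option maxSynthPendingDepth 3 in
/-- For the 2-dimensional Zinbiel algebra with e₁·e₁ = e₂, the second Zinbiel
cohomology with adjoint coefficients is 1-dimensional:
H² = ker δ₂ / im δ₁ has dimension 1. -/
theorem twoDim_zinbiel_H2_dim_one (k : Type*) [Field k] [CharZero k] :
    Module.finrank k
      (↥(LinearMap.ker (zd216 k)) ⧸
        Submodule.comap (LinearMap.ker (zd216 k)).subtype
          (Submodule.span k (Set.range (zd116 k)))) = 1 := by

  set K := LinearMap.ker (zd216 k)
  set ψ : K →ₗ[k] k := (zphi16 k).comp K.subtype with hψ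
  have e10 : (Pi.single 0 1 : Fin 2 → k) 0 = 1 := by simp
  have e11 : (Pi.single 0 1 : Fin 2 → k) 1 = 0 := by simp
  have e20 : (Pi.single 1 1 : Fin 2 → k) 0 = 0 := by simp
  have e21 : (Pi.single 1 1 : Fin 2 → k) 1 = 1 := by simp
  -- the element w with ψ w = 1
  set w : (Fin 2 → k) →ₗ[k] (Fin 2 → k) →ₗ[k] (Fin 2 → k) :=
    (LinearMap.proj 0).smulRight
      ((LinearMap.proj 0).smulRight ((-2 : k) • (Pi.single 0 1 : Fin 2 → k)) +
        (LinearMap.proj 1).smulRight (Pi.single 1 1 : Fin 2 → k)) with hw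
  have hwapp : ∀ x y : Fin 2 → k,
      w x y = (x 0 * y 0) • ((-2 : k) • (Pi.single 0 1 : Fin 2 → k))
        + (x 0 * y 1) • (Pi.single 1 1 : Fin 2 → k) := by
    intro x y
    simp [hw, smul_smul, smul_add]
    ring_nf
  have hwker : w ∈ K := by
    rw [LinearMap.mem_ker]
    funext x y z
    simp only [zd216_apply, zmul16_apply, hwapp, Pi.zero_apply]
    funext i
    fin_cases i <;>
      simp only [Pi.add_apply, Pi.sub_apply, Pi.smul_apply, smul_eq_mul,
        Pi.zero_apply, Pi.single_apply] <;>
      norm_num <;> ring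
  have hψw : ψ ⟨w, hwker⟩ = 1 := by
    simp [hψ, zphi16, hwapp, e10, e11, e20, e21, Pi.single_apply]
  have hsurj : Function.Surjective ψ := by
    intro c
    refine ⟨c • ⟨w, hwker⟩, ?_⟩
    rw [map_smul, hψw, smul_eq_mul, mul_one]
  have hS : Submodule.comap K.subtype (Submodule.span k (Set.range (zd116 k)))
      = LinearMap.ker ψ := by
    ext ⟨f, hf⟩
    simp only [Submodule.mem_comap, Submodule.coe_subtype, LinearMap.mem_ker,
      hψ, LinearMap.comp_apply]
    constructor
    · intro hmem
      have hle : Submodule.span k (Set.range (zd116 k)) ≤ LinearMap.ker (zphi16 k) := by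
        rw [Submodule.span_le]
        rintro _ ⟨g, rfl⟩
        rw [SetLike.mem_coe, LinearMap.mem_ker]
        simp [zphi16, zd116_apply, zmul16_apply, e10, e11, e20, e21, Pi.single_apply]
      exact hle hmem
    · intro hphi
      apply Submodule.subset_span
      -- extract component relations from hf : zd216 k f = 0
      have hf' : zd216 k f = 0 := hf
      have rel : ∀ (x y z : Fin 2 → k) (i : Fin 2),
          zd216 k f x y z i = 0 := by
        intro x y z i; rw [hf']; rfl
      set E1 : Fin 2 → k := Pi.single 0 1 with hE1
      set E2 : Fin 2 → k := Pi.single 1 1 with hE2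
      have hmulE : zmul16 k E1 E1 = E2 := by
        rw [zmul16_apply]; simp [hE1, hE2]
      have hmul0 : ∀ v : Fin 2 → k, zmul16 k v E2 = 0 := by
        intro v; rw [zmul16_apply]; simp [hE2]
      have hmul0' : ∀ v : Fin 2 → k, zmul16 k E2 v = 0 := by
        intro v; rw [zmul16_apply]; simp [hE2]
      have hmulv : ∀ v : Fin 2 → k, zmul16 k v E1 = v 0 • E2 := by
        intro v; rw [zmul16_apply]; simp [hE1, hE2]
      have hmulv' : ∀ v : Fin 2 → k, zmul16 k E1 v = v 0 • E2 := by
        intro v; rw [zmul16_apply]; simp [hE1, hE2]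
      -- the relations
      have r121 : f E2 E1 0 = 0 := by
        have := rel E1 E2 E1 1
        simp only [zd216_apply, hmulE, hmul0, hmul0', hmulv, hmulv', map_smul, map_zero,
          LinearMap.smul_apply, LinearMap.zero_apply, Pi.add_apply, Pi.sub_apply,
          Pi.smul_apply, Pi.zero_apply, smul_eq_mul] at this
        simp only [hE1, hE2, Pi.single_apply] at this
        simp only [← hE1, ← hE2] at this
        simpa using this
      have r111a : f E1 E2 0 = 0 := by
        have := rel E1 E1 E1 0
        simp only [zd216_apply, hmulE, hmul0, hmul0', hmulv, hmulv', map_smul, map_zero,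
          LinearMap.smul_apply, LinearMap.zero_apply, Pi.add_apply, Pi.sub_apply,
          Pi.smul_apply, Pi.zero_apply, smul_eq_mul] at this
        simp only [hE1, hE2, Pi.single_apply] at this
        simp only [← hE1, ← hE2] at this
        simp only [r121] at this
        -- this : 2 * f E1 E2 0 = 0 (some arrangement)
        norm_num at this
        exact this
      have r112a : f E2 E2 0 = 0 := by
        have := rel E1 E1 E2 0
        simp only [zd216_apply, hmulE, hmul0, hmul0', hmulv, hmulv', map_smul, map_zero,
          LinearMap.smul_apply, LinearMap.zero_apply, Pi.add_apply, Pi.sub_apply,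
          Pi.smul_apply, Pi.zero_apply, smul_eq_mul] at this
        simp only [hE1, hE2, Pi.single_apply] at this
        simp only [← hE1, ← hE2] at this
        simpa using this
      have r112b : f E2 E2 1 = 0 := by
        have := rel E1 E1 E2 1
        simp only [zd216_apply, hmulE, hmul0, hmul0', hmulv, hmulv', map_smul, map_zero,
          LinearMap.smul_apply, LinearMap.zero_apply, Pi.add_apply, Pi.sub_apply,
          Pi.smul_apply, Pi.zero_apply, smul_eq_mul] at this
        simp only [hE1, hE2, Pi.single_apply] at this
        simp only [← hE1, ← hE2] at this
        simp only [r111a, r121] at this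
        norm_num at this
        exact this
      have r111b : f E1 E1 0 = f E2 E1 1 - 2 * f E1 E2 1 := by
        have := rel E1 E1 E1 1
        simp only [zd216_apply, hmulE, hmul0, hmul0', hmulv, hmulv', map_smul, map_zero,
          LinearMap.smul_apply, LinearMap.zero_apply, Pi.add_apply, Pi.sub_apply,
          Pi.smul_apply, Pi.zero_apply, smul_eq_mul] at this
        simp only [hE1, hE2, Pi.single_apply] at this
        simp only [← hE1, ← hE2] at this
        norm_num at this
        linear_combination this
      have hphi' : f E1 E2 1 = f E2 E1 1 := by
        have : zphi16 k f = 0 := hphi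
        simp only [zphi16, LinearMap.coe_mk, AddHom.coe_mk, ← hE1, ← hE2] at this
        linear_combination this
      -- the preimage
      set gmap : (Fin 2 → k) →ₗ[k] (Fin 2 → k) :=
        (LinearMap.proj 0).smulRight ((f E1 E1 1 / 2) • E1)
          + (LinearMap.proj 1).smulRight ((f E1 E2 1) • E1) with hgdef
      refine ⟨gmap, ?_⟩
      have hg : ∀ v : Fin 2 → k,
          gmap v = (v 0 * (f E1 E1 1 / 2)) • E1 + (v 1 * (f E1 E2 1)) • E1 := by
        intro v; simp [hgdef, smul_smul]
      have hgm1 : gmap E1 = (f E1 E1 1 / 2) • E1 := by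
        rw [hg]
        funext i
        fin_cases i <;> simp [hE1, hE2, Pi.single_apply]
      have hgm2 : gmap E2 = (f E1 E2 1) • E1 := by
        rw [hg]
        funext i
        fin_cases i <;> simp [hE1, hE2, Pi.single_apply]
      have z11 : zd116 k gmap E1 E1 = f E1 E1 := by
        rw [zd116_apply]
        simp only [hmulE, hmul0, hmul0', hmulv, hmulv', hgm1, hgm2, map_smul, map_zero,
          Pi.smul_apply, smul_eq_mul, LinearMap.smul_apply]
        funext i
        simp only [Pi.add_apply, Pi.sub_apply, Pi.smul_apply, Pi.zero_apply, smul_eq_mul,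
          hE1, hE2, Pi.single_apply]
        simp only [← hE1, ← hE2]
        fin_cases i <;> norm_num
        · linear_combination -r111b + hphi'
      have z12 : zd116 k gmap E1 E2 = f E1 E2 := by
        rw [zd116_apply]
        simp only [hmulE, hmul0, hmul0', hmulv, hmulv', hgm1, hgm2, map_smul, map_zero,
          Pi.smul_apply, smul_eq_mul, LinearMap.smul_apply]
        funext i
        simp only [Pi.add_apply, Pi.sub_apply, Pi.smul_apply, Pi.zero_apply, smul_eq_mul,
          hE1, hE2, Pi.single_apply]
        simp only [← hE1, ← hE2]
        fin_cases i <;> norm_num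
        · linear_combination -r111a
      have z21 : zd116 k gmap E2 E1 = f E2 E1 := by
        rw [zd116_apply]
        simp only [hmulE, hmul0, hmul0', hmulv, hmulv', hgm1, hgm2, map_smul, map_zero,
          Pi.smul_apply, smul_eq_mul, LinearMap.smul_apply]
        funext i
        simp only [Pi.add_apply, Pi.sub_apply, Pi.smul_apply, Pi.zero_apply, smul_eq_mul,
          hE1, hE2, Pi.single_apply]
        simp only [← hE1, ← hE2]
        fin_cases i <;> norm_num
        · linear_combination -r121
        · linear_combination hphi'
      have z22 : zd116 k gmap E2 E2 = f E2 E2 := by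
        rw [zd116_apply]
        simp only [hmulE, hmul0, hmul0', hmulv, hmulv', hgm1, hgm2, map_smul, map_zero,
          Pi.smul_apply, smul_eq_mul, LinearMap.smul_apply]
        funext i
        simp only [Pi.add_apply, Pi.sub_apply, Pi.smul_apply, Pi.zero_apply, smul_eq_mul,
          hE1, hE2, Pi.single_apply]
        simp only [← hE1, ← hE2]
        fin_cases i <;> norm_num
        · linear_combination -r112a
        · linear_combination -r112b
      apply LinearMap.ext; intro x
      apply LinearMap.ext; intro y
      rw [pi_two_decomp k x, pi_two_decomp k y]
      simp only [map_add, map_smul, LinearMap.add_apply, LinearMap.smul_apply, ← hE1, ← hE2]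
      rw [z11, z12, z21, z22]
  rw [hS, (ψ.quotKerEquivOfSurjective hsurj).finrank_eq, Module.finrank_self]
end
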